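/- Let μ be a finite Borel measure on ℝ^d whose Fourier transform μ̂ is α-Hölder for some α ∈ (0,1]. Then for all θ ∈ [0,1], dim_F^θ μ ≤ dim_F μ + d(1 + dim_F μ/(2α))·θ. In particular, θ ↦ dim_F^θ μ is Lipschitz continuous on [0,1]. -/

import Mathlib

open MeasureTheory Filter Set
open scoped ENNReal NNReal

noncomputable section

abbrev Ed (d : ℕ) := EuclideanSpace ℝ (Fin d)

noncomputable def ftm {d : ℕ} (μ : Measure (Ed d)) (z : Ed d) : ℂ :=
  ∫ x, Complex.exp (Complex.I * (-2 * Real.pi * (inner ℝ z x : ℝ))) ∂μ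

noncomputable def energyJ {d : ℕ} (μ : Measure (Ed d)) (s θ : ℝ) : ℝ≥0∞ :=
  if θ = 0 then ⨆ z : Ed d, ENNReal.ofReal (‖ftm μ z‖ ^ 2 * ‖z‖ ^ s)
  else (∫⁻ z : Ed d, ENNReal.ofReal (‖ftm μ z‖ ^ (2 / θ) * ‖z‖ ^ (s / θ - d))) ^ θ

noncomputable def dimF {d : ℕ} (μ : Measure (Ed d)) (θ : ℝ) : ℝ≥0∞ :=
  ⨆ (s : NNReal) (_ : energyJ μ s θ < ⊤), (s : ℝ≥0∞)

def sptm {d : ℕ} (μ : Measure (Ed d)) : Set (Ed d) := {x | ∀ r > 0, 0 < μ (Metric.ball x r)}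

noncomputable def dimFS {d : ℕ} (X : Set (Ed d)) (θ : ℝ) : ℝ≥0∞ :=
  ⨆ (μ : Measure (Ed d)) (_ : IsFiniteMeasure μ) (_ : μ ≠ 0) (_ : sptm μ ⊆ X),
    min (dimF μ θ) (d : ℝ≥0∞)

/-!
Write `g = ‖μ̂‖`. Where `g z > 0`, Hölder continuity keeps `g ≥ g z / 2` on a ball of radius
`≍ (g z) ^ (1 / α)` around `z`, so a finite `θ`-energy integral forces the pointwise decay
`g(z) ^ (2 / θ + d / α) * ‖z‖ ^ (s / θ - d) = O(1)`. That is a finite `0`-energy, which gives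
`dim_F^θ μ ≤ dim_F μ + d (1 + dim_F μ / (2α)) θ`. The spectrum is nondecreasing (Hölder's
inequality), and interpolating against the sup bound at `θ = 0` gives
`dim_F^{tθ} μ ≥ (1 - t) dim_F μ + t dim_F^θ μ`; together with the upper bound at `θ` this is the
Lipschitz estimate.
-/

open Metric

section Integrability

variable {E : Type*} [NormedAddCommGroup E] [NormedSpace ℝ E] [FiniteDimensional ℝ E]
  [MeasurableSpace E] [BorelSpace E] (ν : Measure E) [ν.IsAddHaarMeasure]

lemma lintegral_ball_rpow_norm_lt_top (hE : 1 ≤ Module.finrank ℝ E) {c : ℝ}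
    (hc : -(Module.finrank ℝ E : ℝ) < c) :
    ∫⁻ z in ball (0 : E) 1, ENNReal.ofReal (‖z‖ ^ c) ∂ν < ⊤ := by
  refine Integrable.lintegral_lt_top
    (integrableOn_ball_of_norm_le_rpow hE (C := 1) (α := -c) (by linarith) ?_ ?_)
  · exact ae_of_all _ fun z => by simp [abs_of_nonneg (Real.rpow_nonneg (norm_nonneg z) c)]
  · exact (measurable_norm.pow_const c).aestronglyMeasurable

lemma lintegral_compl_ball_rpow_norm_lt_top {c : ℝ} (hc : c < -(Module.finrank ℝ E : ℝ)) :
    ∫⁻ z in (ball (0 : E) 1)ᶜ, ENNReal.ofReal (‖z‖ ^ c) ∂ν < ⊤ := by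
  have hc0 : c < 0 := hc.trans_le (by simp)
  have hint := ((integrable_one_add_norm (μ := ν) (r := -c) (by linarith)).const_mul
    ((2 : ℝ) ^ (-c))).integrableOn (s := (ball (0 : E) 1)ᶜ)
  refine Integrable.lintegral_lt_top
    (hint.mono' (measurable_norm.pow_const c).aestronglyMeasurable ?_)
  filter_upwards [ae_restrict_mem measurableSet_ball.compl] with z hz
  have hz1 : 1 ≤ ‖z‖ := by simpa using hz
  calc ‖‖z‖ ^ c‖ = 2 ^ (-c) * (2 * ‖z‖) ^ c := by
        rw [Real.norm_of_nonneg (by positivity), Real.mul_rpow (by norm_num) (by positivity),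
          ← mul_assoc, ← Real.rpow_add two_pos, neg_add_cancel, Real.rpow_zero, one_mul]
    _ ≤ 2 ^ (-c) * (1 + ‖z‖) ^ (-(-c)) := by
        rw [neg_neg]
        gcongr ?_ * ?_
        exact Real.rpow_le_rpow_of_nonpos (by positivity) (by linarith) hc0.le

end Integrability

section HolderDecay

variable {d : ℕ} {F : Type*} [SeminormedAddCommGroup F] {f : Ed d → F} {C α : ℝ}

lemma norm_half_le_of_mem_ball (hC : 0 < C) (hα : 0 < α)
    (hf : ∀ x y, ‖f x - f y‖ ≤ C * ‖x - y‖ ^ α) {z w : Ed d}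
    (hw : w ∈ ball z ((‖f z‖ / (2 * C)) ^ α⁻¹)) : ‖f z‖ / 2 ≤ ‖f w‖ := by
  have hzw : ‖z - w‖ ^ α ≤ ‖f z‖ / (2 * C) := by
    have : ‖z - w‖ ≤ (‖f z‖ / (2 * C)) ^ α⁻¹ := by
      rw [← dist_eq_norm, dist_comm]; exact (mem_ball.1 hw).le
    calc ‖z - w‖ ^ α ≤ ((‖f z‖ / (2 * C)) ^ α⁻¹) ^ α := by gcongr
      _ = ‖f z‖ / (2 * C) := Real.rpow_inv_rpow (by positivity) hα.ne'
  have h1 := (norm_sub_norm_le (f z) (f w)).trans (hf z w)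
  have h2 : C * (‖f z‖ / (2 * C)) = ‖f z‖ / 2 := by field_simp
  nlinarith [mul_le_mul_of_nonneg_left hzw hC.le]

lemma ofReal_mul_volume_ball_le_lintegral (hC : 0 < C) (hα : 0 < α)
    (hf : ∀ x y, ‖f x - f y‖ ≤ C * ‖x - y‖ ^ α) {M p q : ℝ} (hM : ∀ z, ‖f z‖ ≤ M)
    (hp : 0 ≤ p) (hq : 0 ≤ q) {z : Ed d} (hz : 2 * (M / (2 * C)) ^ α⁻¹ ≤ ‖z‖) :
    ENNReal.ofReal ((‖f z‖ / 2) ^ p * (‖z‖ / 2) ^ q) *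
        volume (ball z ((‖f z‖ / (2 * C)) ^ α⁻¹)) ≤
      ∫⁻ w, ENNReal.ofReal (‖f w‖ ^ p * ‖w‖ ^ q) := by
  set r := (‖f z‖ / (2 * C)) ^ α⁻¹
  have hr : r ≤ ‖z‖ / 2 := by
    have : r ≤ (M / (2 * C)) ^ α⁻¹ := by simp only [r]; gcongr; exact hM z
    linarith
  calc ENNReal.ofReal ((‖f z‖ / 2) ^ p * (‖z‖ / 2) ^ q) * volume (ball z r)
      = ∫⁻ _ in ball z r, ENNReal.ofReal ((‖f z‖ / 2) ^ p * (‖z‖ / 2) ^ q) :=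
        (setLIntegral_const _ _).symm
    _ ≤ ∫⁻ w in ball z r, ENNReal.ofReal (‖f w‖ ^ p * ‖w‖ ^ q) := by
        refine setLIntegral_mono' measurableSet_ball fun w hw => ?_
        have hzw : ‖z‖ / 2 ≤ ‖w‖ := by
          have := norm_sub_norm_le z w
          rw [← dist_eq_norm, dist_comm] at this
          linarith [mem_ball.1 hw]
        gcongr
        exact norm_half_le_of_mem_ball hC hα hf hw
    _ ≤ ∫⁻ w, ENNReal.ofReal (‖f w‖ ^ p * ‖w‖ ^ q) := setLIntegral_le_lintegral _ _

theorem exists_rpow_mul_rpow_le_of_lintegral_lt_top (hd : 1 ≤ d) (hC : 0 < C) (hα : 0 < α)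
    (hf : ∀ x y, ‖f x - f y‖ ≤ C * ‖x - y‖ ^ α) {M p q : ℝ} (hM : ∀ z, ‖f z‖ ≤ M)
    (hp : 0 < p) (hq : 0 ≤ q) (hI : ∫⁻ w, ENNReal.ofReal (‖f w‖ ^ p * ‖w‖ ^ q) < ⊤) :
    ∃ K, ∀ z, ‖f z‖ ^ (p + d / α) * ‖z‖ ^ q ≤ K := by
  have : Nontrivial (Ed d) := Module.nontrivial_of_finrank_pos (R := ℝ) (by simp; omega)
  set R := 2 * (M / (2 * C)) ^ α⁻¹
  set V := volume (ball (0 : Ed d) 1)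
  set I := ∫⁻ w, ENNReal.ofReal (‖f w‖ ^ p * ‖w‖ ^ q)
  have hM0 : 0 ≤ M := (norm_nonneg _).trans (hM 0)
  refine ⟨max (M ^ (p + d / α) * R ^ q)
    (2 ^ p * 2 ^ q * (2 * C) ^ (d / α : ℝ) * (I / V).toReal), fun z => ?_⟩
  have hg := norm_nonneg (f z)
  rcases lt_or_ge ‖z‖ R with hz | hz
  · refine le_max_of_le_left ?_
    gcongr
    exact hM z
  refine le_max_of_le_right ?_
  have hvol : volume (ball z ((‖f z‖ / (2 * C)) ^ α⁻¹)) =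
      ENNReal.ofReal ((‖f z‖ / (2 * C)) ^ (d / α : ℝ)) * V := by
    rw [Measure.addHaar_ball _ _ (by positivity), finrank_euclideanSpace_fin,
      ← Real.rpow_natCast, ← Real.rpow_mul (by positivity), inv_mul_eq_div]
  have hlow := ofReal_mul_volume_ball_le_lintegral hC hα hf hM hp.le hq hz
  rw [hvol, ← mul_assoc, ← ENNReal.ofReal_mul (by positivity),
    ← ENNReal.le_div_iff_mul_le (Or.inl (measure_ball_pos _ _ one_pos).ne')
      (Or.inl measure_ball_lt_top.ne)] at hlow
  have hX := (ENNReal.ofReal_le_iff_le_toReal (ENNReal.div_lt_top hI.ne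
    (measure_ball_pos _ _ one_pos).ne').ne).1 hlow
  calc ‖f z‖ ^ (p + d / α) * ‖z‖ ^ q
      = 2 ^ p * 2 ^ q * (2 * C) ^ (d / α : ℝ) *
          ((‖f z‖ / 2) ^ p * (‖z‖ / 2) ^ q * (‖f z‖ / (2 * C)) ^ (d / α : ℝ)) := by
        rw [Real.rpow_add' hg (by positivity), Real.div_rpow hg (by norm_num),
          Real.div_rpow (norm_nonneg z) (by norm_num), Real.div_rpow hg (by positivity)]
        field_simp
    _ ≤ 2 ^ p * 2 ^ q * (2 * C) ^ (d / α : ℝ) * (I / V).toReal := by gcongr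

end HolderDecay

section FourierTransform

variable {d : ℕ} (μ : Measure (Ed d))

lemma ftm_eq_charFun (z : Ed d) : ftm μ z = charFun μ ((-2 * Real.pi) • z) := by
  simp only [ftm, charFun_apply, inner_smul_right, real_inner_comm z]
  congr 1 with x
  push_cast
  ring_nf

lemma norm_ftm_le (z : Ed d) : ‖ftm μ z‖ ≤ μ.real univ := by
  rw [ftm_eq_charFun]; exact norm_charFun_le _

lemma continuous_ftm [IsFiniteMeasure μ] : Continuous (ftm μ) := by
  simp_rw [funext (ftm_eq_charFun μ)]
  fun_prop

end FourierTransform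

section Energy

variable {d : ℕ} {μ : Measure (Ed d)}

def energyDensity (μ : Measure (Ed d)) (p q : ℝ) (z : Ed d) : ℝ≥0∞ :=
  ENNReal.ofReal (‖ftm μ z‖ ^ p * ‖z‖ ^ q)

lemma measurable_energyDensity [IsFiniteMeasure μ] (p q : ℝ) :
    Measurable (energyDensity μ p q) :=
  ENNReal.measurable_ofReal.comp
    (((continuous_ftm μ).norm.measurable.pow_const p).mul (measurable_norm.pow_const q))

lemma energyJ_lt_top_iff {s θ : ℝ} (hθ : 0 < θ) :
    energyJ μ s θ < ⊤ ↔ ∫⁻ z, energyDensity μ (2 / θ) (s / θ - d) z < ⊤ := by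
  rw [energyJ, if_neg hθ.ne', ENNReal.rpow_lt_top_iff_of_pos hθ]
  rfl

lemma energyJ_zero_lt_top_iff {s : ℝ} :
    energyJ μ s 0 < ⊤ ↔ ∃ B, ∀ z, ‖ftm μ z‖ ^ 2 * ‖z‖ ^ s ≤ B := by
  rw [energyJ, if_pos rfl]
  constructor
  · intro h
    refine ⟨(⨆ z, ENNReal.ofReal (‖ftm μ z‖ ^ 2 * ‖z‖ ^ s)).toReal, fun z => ?_⟩
    exact (ENNReal.ofReal_le_iff_le_toReal h.ne).1 (le_iSup_of_le z le_rfl)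
  · rintro ⟨B, hB⟩
    exact (iSup_le fun z => ENNReal.ofReal_le_ofReal (hB z)).trans_lt ENNReal.ofReal_lt_top

lemma energyJ_zero_zero_lt_top : energyJ μ 0 0 < ⊤ :=
  energyJ_zero_lt_top_iff.2 ⟨(μ.real univ) ^ 2, fun z => by
    simpa using pow_le_pow_left₀ (norm_nonneg _) (norm_ftm_le μ z) 2⟩

lemma energyDensity_le_mul {s B γ p q : ℝ} (hB : ∀ z, ‖ftm μ z‖ ^ 2 * ‖z‖ ^ s ≤ B)
    (hγ : 0 ≤ γ) (hp : 2 * γ + p ≠ 0) {z : Ed d} (hz : z ≠ 0) :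
    energyDensity μ (2 * γ + p) (s * γ + q) z ≤ ENNReal.ofReal (B ^ γ) * energyDensity μ p q z := by
  have hz0 : 0 < ‖z‖ := norm_pos_iff.2 hz
  have hg := norm_nonneg (ftm μ z)
  have hB0 : 0 ≤ B := (by positivity : 0 ≤ ‖ftm μ z‖ ^ 2 * ‖z‖ ^ s).trans (hB z)
  have hsplit : ‖ftm μ z‖ ^ (2 * γ + p) * ‖z‖ ^ (s * γ + q) =
      (‖ftm μ z‖ ^ 2 * ‖z‖ ^ s) ^ γ * (‖ftm μ z‖ ^ p * ‖z‖ ^ q) := by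
    rw [Real.rpow_add' hg hp, Real.rpow_add hz0, Real.mul_rpow (by positivity) (by positivity),
      ← Real.rpow_natCast, ← Real.rpow_mul hg, ← Real.rpow_mul hz0.le]
    push_cast
    ring
  rw [energyDensity, energyDensity, hsplit, ← ENNReal.ofReal_mul (by positivity)]
  exact ENNReal.ofReal_le_ofReal (by gcongr; exact hB z)

lemma energyDensity_rpow_mul_rpow {p q c t : ℝ} (ht0 : 0 ≤ t) (ht1 : t ≤ 1) {z : Ed d}
    (hz : z ≠ 0) :
    energyDensity μ p q z ^ t * ENNReal.ofReal (‖z‖ ^ c) ^ (1 - t) =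
      energyDensity μ (t * p) (t * q + (1 - t) * c) z := by
  have hz0 : 0 < ‖z‖ := norm_pos_iff.2 hz
  rw [energyDensity, energyDensity, ENNReal.ofReal_rpow_of_nonneg (by positivity) ht0,
    ENNReal.ofReal_rpow_of_nonneg (by positivity) (by linarith), ← ENNReal.ofReal_mul
    (by positivity), Real.mul_rpow (by positivity) (by positivity), mul_comm t p,
    Real.rpow_mul (norm_nonneg _), Real.rpow_add hz0, ← Real.rpow_mul hz0.le,
    ← Real.rpow_mul hz0.le]
  ring_nf

lemma setLIntegral_ball_energyDensity_lt_top (hd : 1 ≤ d) {p c : ℝ} (hp : 0 ≤ p)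
    (hc : -(d : ℝ) < c) : ∫⁻ z in ball (0 : Ed d) 1, energyDensity μ p c z < ⊤ :=
  calc ∫⁻ z in ball (0 : Ed d) 1, energyDensity μ p c z
      ≤ ∫⁻ z in ball (0 : Ed d) 1, ENNReal.ofReal (μ.real univ ^ p) * ENNReal.ofReal (‖z‖ ^ c) := by
        refine lintegral_mono fun z => ?_
        rw [energyDensity, ← ENNReal.ofReal_mul (by positivity)]
        gcongr
        exact norm_ftm_le μ z
    _ = ENNReal.ofReal (μ.real univ ^ p) * ∫⁻ z in ball (0 : Ed d) 1, ENNReal.ofReal (‖z‖ ^ c) :=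
        lintegral_const_mul' _ _ ENNReal.ofReal_ne_top
    _ < ⊤ := ENNReal.mul_lt_top ENNReal.ofReal_lt_top
        (lintegral_ball_rpow_norm_lt_top _ (by simpa using hd) (by simpa using hc))

lemma energyJ_lt_top_of_setLIntegral_compl_lt_top (hd : 1 ≤ d) {s θ : ℝ} (hθ : 0 < θ) (hs : 0 < s)
    (h : ∫⁻ z in (ball (0 : Ed d) 1)ᶜ, energyDensity μ (2 / θ) (s / θ - d) z < ⊤) :
    energyJ μ s θ < ⊤ := by
  rw [energyJ_lt_top_iff hθ, ← lintegral_add_compl _ measurableSet_ball]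
  have : 0 < s / θ := by positivity
  exact ENNReal.add_lt_top.2
    ⟨setLIntegral_ball_energyDensity_lt_top hd (by positivity) (by linarith), h⟩

lemma energyJ_lt_top_of_energyJ_zero_lt_top (hd : 1 ≤ d) {s s' θ : ℝ} (hθ : 0 < θ)
    (hs' : 0 < s') (hss : s' < s) (h : energyJ μ s 0 < ⊤) : energyJ μ s' θ < ⊤ := by
  obtain ⟨B, hB⟩ := energyJ_zero_lt_top_iff.1 h
  refine energyJ_lt_top_of_setLIntegral_compl_lt_top hd hθ hs' ?_
  calc ∫⁻ z in (ball (0 : Ed d) 1)ᶜ, energyDensity μ (2 / θ) (s' / θ - d) z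
      ≤ ∫⁻ z in (ball (0 : Ed d) 1)ᶜ,
          ENNReal.ofReal (B ^ θ⁻¹) * ENNReal.ofReal (‖z‖ ^ ((s' - s) / θ - d)) := by
        refine setLIntegral_mono' measurableSet_ball.compl fun z hz => ?_
        have hz0 : z ≠ 0 := by rintro rfl; simp at hz
        have := energyDensity_le_mul (γ := θ⁻¹) (p := 0) (q := (s' - s) / θ - d) hB
          (by positivity) (by positivity) hz0
        rw [show 2 * θ⁻¹ + 0 = 2 / θ by ring,
          show s * θ⁻¹ + ((s' - s) / θ - d) = s' / θ - d by ring] at this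
        simpa only [energyDensity, Real.rpow_zero, one_mul] using this
    _ = ENNReal.ofReal (B ^ θ⁻¹) *
          ∫⁻ z in (ball (0 : Ed d) 1)ᶜ, ENNReal.ofReal (‖z‖ ^ ((s' - s) / θ - d)) :=
        lintegral_const_mul' _ _ ENNReal.ofReal_ne_top
    _ < ⊤ := by
        refine ENNReal.mul_lt_top ENNReal.ofReal_lt_top
          (lintegral_compl_ball_rpow_norm_lt_top _ ?_)
        have : (s' - s) / θ < 0 := div_neg_of_neg_of_pos (by linarith) hθ
        simp only [finrank_euclideanSpace_fin]
        linarith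

lemma energyJ_lt_top_of_energyJ_lt_top [IsFiniteMeasure μ] (hd : 1 ≤ d) {s s' θ₁ θ₂ : ℝ}
    (hθ₁ : 0 < θ₁) (h12 : θ₁ < θ₂) (hs' : 0 < s') (hss : s' < s) (h : energyJ μ s θ₁ < ⊤) :
    energyJ μ s' θ₂ < ⊤ := by
  have hθ₂ := hθ₁.trans h12
  set t := θ₁ / θ₂
  set c := (s' - s) / (θ₂ - θ₁) - d
  have ht0 : 0 ≤ t := by positivity
  have ht1 : t ≤ 1 := (div_le_one hθ₂).2 h12.le
  have hc : c < -(Module.finrank ℝ (Ed d) : ℝ) := by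
    have : (s' - s) / (θ₂ - θ₁) < 0 := div_neg_of_neg_of_pos (by linarith) (by linarith)
    simp only [c, finrank_euclideanSpace_fin]
    linarith
  refine energyJ_lt_top_of_setLIntegral_compl_lt_top hd hθ₂ hs' ?_
  calc ∫⁻ z in (ball (0 : Ed d) 1)ᶜ, energyDensity μ (2 / θ₂) (s' / θ₂ - d) z
      = ∫⁻ z in (ball (0 : Ed d) 1)ᶜ,
          energyDensity μ (2 / θ₁) (s / θ₁ - d) z ^ t * ENNReal.ofReal (‖z‖ ^ c) ^ (1 - t) := by
        refine setLIntegral_congr_fun measurableSet_ball.compl fun z hz => ?_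
        have hz0 : z ≠ 0 := by rintro rfl; simp at hz
        rw [energyDensity_rpow_mul_rpow ht0 ht1 hz0]
        have : θ₂ - θ₁ ≠ 0 := by linarith
        congr 1
        · simp only [t]; field_simp
        · simp only [t, c]; field_simp; ring
    _ ≤ (∫⁻ z in (ball (0 : Ed d) 1)ᶜ, energyDensity μ (2 / θ₁) (s / θ₁ - d) z) ^ t *
          (∫⁻ z in (ball (0 : Ed d) 1)ᶜ, ENNReal.ofReal (‖z‖ ^ c)) ^ (1 - t) :=
        ENNReal.lintegral_mul_norm_pow_le (measurable_energyDensity _ _).aemeasurable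
          (by fun_prop) ht0 (by linarith) (by ring)
    _ < ⊤ := by
        refine ENNReal.mul_lt_top (ENNReal.rpow_lt_top_of_nonneg ht0 ?_)
          (ENNReal.rpow_lt_top_of_nonneg (by linarith)
            (lintegral_compl_ball_rpow_norm_lt_top _ hc).ne)
        exact ((setLIntegral_le_lintegral _ _).trans_lt ((energyJ_lt_top_iff hθ₁).1 h)).ne

lemma energyJ_interpolate_lt_top (hd : 1 ≤ d) {s u θ t : ℝ} (ht0 : 0 < t) (ht1 : t ≤ 1)
    (hθ : 0 < θ) (hs : energyJ μ s 0 < ⊤) (hu : energyJ μ u θ < ⊤) :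
    energyJ μ ((1 - t) * s + t * u) (t * θ) < ⊤ := by
  have : Nontrivial (Ed d) := Module.nontrivial_of_finrank_pos (R := ℝ) (by simp; omega)
  obtain ⟨B, hB⟩ := energyJ_zero_lt_top_iff.1 hs
  set γ := (1 - t) / (t * θ)
  have hγ : 0 ≤ γ := div_nonneg (by linarith) (by positivity)
  rw [energyJ_lt_top_iff (by positivity)]
  refine lt_of_le_of_lt ?_
    (ENNReal.mul_lt_top (ENNReal.ofReal_lt_top (r := B ^ γ)) ((energyJ_lt_top_iff hθ).1 hu))
  rw [← lintegral_const_mul' _ _ ENNReal.ofReal_ne_top]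
  refine lintegral_mono_ae ?_
  filter_upwards [Measure.ae_ne volume 0] with z hz
  have := energyDensity_le_mul (p := 2 / θ) (q := u / θ - d) hB hγ (by positivity) hz
  rwa [show 2 * γ + 2 / θ = 2 / (t * θ) by simp only [γ]; field_simp; ring,
    show s * γ + (u / θ - d) = ((1 - t) * s + t * u) / (t * θ) - d by
      simp only [γ]; field_simp; ring] at this

end Energy

section FourierSpectrum

variable {d : ℕ} {μ : Measure (Ed d)}

lemma le_dimF {s : ℝ≥0} {θ : ℝ} (h : energyJ μ s θ < ⊤) : (s : ℝ≥0∞) ≤ dimF μ θ :=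
  le_iSup₂ (f := fun (s : ℝ≥0) (_ : energyJ μ s θ < ⊤) => (s : ℝ≥0∞)) s h

lemma ofReal_le_dimF {s θ : ℝ} (hs : 0 ≤ s) (h : energyJ μ s θ < ⊤) :
    ENNReal.ofReal s ≤ dimF μ θ :=
  le_dimF (s := s.toNNReal) (by rwa [Real.coe_toNNReal _ hs])

lemma dimF_le_dimF_of_energyJ {θ₁ θ₂ : ℝ}
    (h : ∀ s s' : ℝ, 0 < s' → s' < s → energyJ μ s θ₁ < ⊤ → energyJ μ s' θ₂ < ⊤) :
    dimF μ θ₁ ≤ dimF μ θ₂ := by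
  refine iSup₂_le fun s hs => ENNReal.le_of_forall_nnreal_lt fun s' hs' => ?_
  rcases eq_or_ne s' 0 with rfl | h0
  · simp
  · exact le_dimF (h s s' (NNReal.coe_pos.2 (pos_iff_ne_zero.2 h0)) (by exact_mod_cast hs') hs)

theorem dimF_mono [IsFiniteMeasure μ] (hd : 1 ≤ d) {θ₁ θ₂ : ℝ} (hθ₁ : 0 ≤ θ₁) (h : θ₁ ≤ θ₂) :
    dimF μ θ₁ ≤ dimF μ θ₂ := by
  rcases h.eq_or_lt with rfl | h
  · exact le_rfl
  refine dimF_le_dimF_of_energyJ fun s s' hs' hss hs => ?_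
  rcases hθ₁.eq_or_lt with rfl | hθ₁
  · exact energyJ_lt_top_of_energyJ_zero_lt_top hd h hs' hss hs
  · exact energyJ_lt_top_of_energyJ_lt_top hd hθ₁ h hs' hss hs

theorem ofReal_mul_dimF_zero_add_le (hd : 1 ≤ d) {θ t : ℝ} {u : ℝ≥0} (ht0 : 0 ≤ t)
    (ht1 : t ≤ 1) (hθ : 0 < θ) (hu : energyJ μ u θ < ⊤) :
    ENNReal.ofReal (1 - t) * dimF μ 0 + ENNReal.ofReal t * u ≤ dimF μ (t * θ) := by
  rcases ht0.eq_or_lt with rfl | ht0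
  · simp
  conv_lhs => rw [dimF]; simp only [ENNReal.mul_iSup]
  rw [ENNReal.biSup_add' ⟨0, by simpa using energyJ_zero_zero_lt_top⟩]
  refine iSup₂_le fun σ hσ => ?_
  calc ENNReal.ofReal (1 - t) * σ + ENNReal.ofReal t * u
      = ENNReal.ofReal ((1 - t) * σ + t * u) := by
        rw [ENNReal.ofReal_add (by nlinarith [σ.2]) (by positivity),
          ENNReal.ofReal_mul (by linarith), ENNReal.ofReal_mul ht0.le,
          ENNReal.ofReal_coe_nnreal, ENNReal.ofReal_coe_nnreal]
    _ ≤ dimF μ (t * θ) :=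
        ofReal_le_dimF (by nlinarith [σ.2, u.2]) (energyJ_interpolate_lt_top hd ht0 ht1 hθ hσ hu)

theorem exists_energyJ_zero_lt_top_of_holder (hd : 1 ≤ d) {C α θ u : ℝ} (hC : 0 < C)
    (hα : 0 < α) (hH : ∀ x y : Ed d, ‖ftm μ x - ftm μ y‖ ≤ C * ‖x - y‖ ^ α) (hθ : 0 < θ)
    (hu : energyJ μ u θ < ⊤) :
    ∃ s, 0 ≤ s ∧ energyJ μ s 0 < ⊤ ∧ u ≤ s + d * (1 + s / (2 * α)) * θ := by
  rcases le_or_gt u (d * θ) with hu' | hu'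
  · exact ⟨0, le_rfl, energyJ_zero_zero_lt_top, by simpa using hu'⟩
  set q := u / θ - d
  have hq : 0 < q := by simp only [q]; rw [sub_pos, lt_div_iff₀ hθ]; exact hu'
  set β := 2 / θ + d / α
  have hβ : 0 < β := by positivity
  obtain ⟨K, hK⟩ := exists_rpow_mul_rpow_le_of_lintegral_lt_top hd hC hα hH (norm_ftm_le μ)
    (p := 2 / θ) (q := q) (by positivity) hq.le ((energyJ_lt_top_iff hθ).1 hu)
  refine ⟨2 * q / β, by positivity, energyJ_zero_lt_top_iff.2 ⟨K ^ (2 / β), fun z => ?_⟩, ?_⟩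
  · calc ‖ftm μ z‖ ^ 2 * ‖z‖ ^ (2 * q / β) = (‖ftm μ z‖ ^ β * ‖z‖ ^ q) ^ (2 / β) := by
          rw [Real.mul_rpow (by positivity) (by positivity), ← Real.rpow_mul (norm_nonneg _),
            ← Real.rpow_mul (norm_nonneg _), mul_div_cancel₀ _ hβ.ne', ← Real.rpow_natCast]
          congr 2; ring
      _ ≤ K ^ (2 / β) := by gcongr; exact hK z
  · refine le_of_eq ?_
    simp only [q, β]
    field_simp
    ring

theorem dimF_le_of_holder (hd : 1 ≤ d) {C α θ : ℝ} (hC : 0 < C) (hα : 0 < α)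
    (hH : ∀ x y : Ed d, ‖ftm μ x - ftm μ y‖ ≤ C * ‖x - y‖ ^ α) (hθ : 0 ≤ θ) :
    dimF μ θ ≤ dimF μ 0 + d * (1 + dimF μ 0 / ENNReal.ofReal (2 * α)) * ENNReal.ofReal θ := by
  rcases hθ.eq_or_lt with rfl | hθ
  · exact le_self_add
  refine iSup₂_le fun u hu => ?_
  obtain ⟨s, hs0, hs, hus⟩ := exists_energyJ_zero_lt_top_of_holder hd hC hα hH hθ hu
  calc (u : ℝ≥0∞) = ENNReal.ofReal u := ENNReal.ofReal_coe_nnreal.symm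
    _ ≤ ENNReal.ofReal (s + d * (1 + s / (2 * α)) * θ) := ENNReal.ofReal_le_ofReal hus
    _ = ENNReal.ofReal s +
          d * (1 + ENNReal.ofReal s / ENNReal.ofReal (2 * α)) * ENNReal.ofReal θ := by
        rw [ENNReal.ofReal_add hs0 (by positivity), ENNReal.ofReal_mul (by positivity),
          ENNReal.ofReal_mul (by positivity), ENNReal.ofReal_natCast,
          ENNReal.ofReal_add zero_le_one (by positivity), ENNReal.ofReal_one,
          ENNReal.ofReal_div_of_pos (by positivity)]
    _ ≤ _ := by
        have := ofReal_le_dimF hs0 hs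
        gcongr

theorem dimF_le_dimF_add_of_holder [IsFiniteMeasure μ] (hd : 1 ≤ d) {C α θ₁ θ₂ : ℝ}
    (hC : 0 < C) (hα : 0 < α) (hH : ∀ x y : Ed d, ‖ftm μ x - ftm μ y‖ ≤ C * ‖x - y‖ ^ α)
    (hθ₂ : 0 ≤ θ₂) (h : θ₂ < θ₁) :
    dimF μ θ₁ ≤ dimF μ θ₂ +
      d * (1 + dimF μ 0 / ENNReal.ofReal (2 * α)) * ENNReal.ofReal (θ₁ - θ₂) := by
  set K := (d : ℝ≥0∞) * (1 + dimF μ 0 / ENNReal.ofReal (2 * α))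
  have hθ₁ : 0 < θ₁ := hθ₂.trans_lt h
  set t := θ₂ / θ₁
  have ht0 : 0 ≤ t := by positivity
  have ht1 : t ≤ 1 := (div_le_one hθ₁).2 h.le
  refine iSup₂_le fun u hu => ?_
  have hu₁ : (u : ℝ≥0∞) ≤ dimF μ 0 + K * ENNReal.ofReal θ₁ :=
    (le_dimF hu).trans (dimF_le_of_holder hd hC hα hH hθ₁.le)
  have hconc := ofReal_mul_dimF_zero_add_le hd ht0 ht1 hθ₁ hu
  rw [show t * θ₁ = θ₂ by simp only [t]; field_simp] at hconc
  calc (u : ℝ≥0∞) = ENNReal.ofReal (1 - t) * u + ENNReal.ofReal t * u := by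
        rw [← add_mul, ← ENNReal.ofReal_add (by linarith) ht0, sub_add_cancel,
          ENNReal.ofReal_one, one_mul]
    _ ≤ ENNReal.ofReal (1 - t) * (dimF μ 0 + K * ENNReal.ofReal θ₁) + ENNReal.ofReal t * u := by
        gcongr
    _ = (ENNReal.ofReal (1 - t) * dimF μ 0 + ENNReal.ofReal t * u) +
          K * ENNReal.ofReal ((1 - t) * θ₁) := by
        rw [ENNReal.ofReal_mul (by linarith)]
        ring
    _ ≤ dimF μ θ₂ + K * ENNReal.ofReal (θ₁ - θ₂) := by
        rw [show (1 - t) * θ₁ = θ₁ - θ₂ by simp only [t]; field_simp]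
        gcongr

end FourierSpectrum

/-- If the Fourier transform of a finite Borel measure `μ` on `ℝ^d`
is `α`-Hölder, then `dim_F^θ μ ≤ dim_F μ + d(1 + dim_F μ/(2α))θ` for all `θ ∈ [0,1]`;
in particular `θ ↦ dim_F^θ μ` is Lipschitz continuous on `[0,1]`. -/
theorem statement2 {d : ℕ} (hd : 1 ≤ d) (μ : Measure (Ed d)) [IsFiniteMeasure μ]
    (α : ℝ) (hα : α ∈ Set.Ioc (0:ℝ) 1)
    (hHolder : ∃ C : ℝ, 0 < C ∧ ∀ x y : Ed d,
      ‖ftm μ x - ftm μ y‖ ≤ C * ‖x - y‖ ^ α) :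
    (∀ θ ∈ Set.Icc (0:ℝ) 1,
      dimF μ θ ≤ dimF μ 0 + (d : ℝ≥0∞) * (1 + dimF μ 0 / ENNReal.ofReal (2 * α)) *
        ENNReal.ofReal θ) ∧
    ∃ L : ℝ≥0, ∀ θ₁ ∈ Set.Icc (0:ℝ) 1, ∀ θ₂ ∈ Set.Icc (0:ℝ) 1,
      dimF μ θ₁ ≤ dimF μ θ₂ + (L : ℝ≥0∞) * ENNReal.ofReal |θ₁ - θ₂| := by
  obtain ⟨C, hC, hH⟩ := hHolder
  refine ⟨fun θ hθ => dimF_le_of_holder hd hC hα.1 hH hθ.1, ?_⟩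
  set K := (d : ℝ≥0∞) * (1 + dimF μ 0 / ENNReal.ofReal (2 * α))
  refine ⟨K.toNNReal, fun θ₁ hθ₁ θ₂ hθ₂ => ?_⟩
  rcases le_or_gt θ₁ θ₂ with h | h
  · exact (dimF_mono hd hθ₁.1 h).trans le_self_add
  rcases eq_or_ne (dimF μ 0) ⊤ with hT | hT
  · have h₂ : dimF μ θ₂ = ⊤ := top_unique (hT ▸ dimF_mono hd le_rfl hθ₂.1)
    simp [h₂]
  have hK : K ≠ ⊤ := ENNReal.mul_ne_top (ENNReal.natCast_ne_top d)
    (ENNReal.add_ne_top.2 ⟨ENNReal.one_ne_top, ENNReal.div_ne_top hT (by simpa using hα.1)⟩)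
  rw [ENNReal.coe_toNNReal hK, abs_of_pos (sub_pos.2 h)]
  exact dimF_le_dimF_add_of_holder hd hC hα.1 hH hθ₂.1 h
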